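/- arXiv:2103.13387 — 4 statements merged into one kernel-verified Lean document; each statement's English description precedes it below -/
import Mathlib

section
/- Let G be a locally compact Hausdorff group with left Haar measure λ_G, N a closed normal subgroup with left Haar measure λ_N, ν a measure on G/N satisfying Weil's formula, and ξ : N → 𝕋 a G-invariant character. Then for all continuous compactly supported f, g : G → ℂ, every x ∈ G, and every function F : G/N → ℂ satisfying F(q(y)) = T_ξ(f)(y) · T_ξ(g)(y⁻¹ x) for all y ∈ G, one has T_ξ(f ∗_G g)(x) = ∫_{G/N} F dν. -/
/-!
`T_ξ g` is `ξ`-covariant under right translation by `N` (left invariance of `λ_N`), and hence,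
`ξ` being `G`-invariant, also under left translation. So the `N`-fibre integrals of
`h y = f y · T_ξ g (y⁻¹ x)` are `T_ξ f (y) · T_ξ g (y⁻¹ x)`, i.e. `F` is the Weil average of `h`.
Fubini on `N × G` (the integrand is continuous with compact support since `N` is closed) turns
`T_ξ (f ∗ g) (x)` into `∫_G h`, and Weil's formula finishes.
-/

open MeasureTheory ComplexConjugate
open scoped Pointwise

namespace Subgroup

variable {G : Type*} [Group G] [MeasurableSpace G] {N : Subgroup G}

/-- The operator `T_ξ`. -/
noncomputable def twistedPeriodization (μ : Measure N) (ξ : N →* Circle) (g : G → ℂ) (z : G) :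
    ℂ :=
  ∫ t : N, g (z * t) * conj (ξ t : ℂ) ∂μ

variable (μ : Measure N) (ξ : N →* Circle)

theorem twistedPeriodization_mul_coe [MeasurableMul N] [μ.IsMulLeftInvariant]
    (g : G → ℂ) (z : G) (n : N) :
    twistedPeriodization μ ξ g (z * n) = ξ n * twistedPeriodization μ ξ g z := by
  let ψ : N → ℂ := fun u => g (z * u) * conj (ξ (n⁻¹ * u) : ℂ)
  calc twistedPeriodization μ ξ g (z * n) = ∫ t, ψ (n * t) ∂μ := by
        simp [twistedPeriodization, ψ, mul_assoc]
    _ = ∫ u, ψ u ∂μ := integral_mul_left_eq_self ψ n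
    _ = ξ n * twistedPeriodization μ ξ g z := by
        rw [twistedPeriodization, ← integral_const_mul]
        congr 1 with u
        simp only [ψ, map_mul, map_inv, Circle.coe_mul, Circle.coe_inv_eq_conj,
          Complex.conj_conj]
        ring

theorem twistedPeriodization_coe_mul [MeasurableMul N] [μ.IsMulLeftInvariant] [N.Normal]
    (hξ : ∀ (x s : G) (hs : s ∈ N) (hs' : x⁻¹ * s * x ∈ N), ξ ⟨x⁻¹ * s * x, hs'⟩ = ξ ⟨s, hs⟩)
    (g : G → ℂ) (n : N) (z : G) :
    twistedPeriodization μ ξ g (n * z) = ξ n * twistedPeriodization μ ξ g z := by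
  have hconj := ‹N.Normal›.conj_mem' n n.2 z
  calc twistedPeriodization μ ξ g (n * z)
        = twistedPeriodization μ ξ g (z * (⟨z⁻¹ * n * z, hconj⟩ : N)) := by
          congr 1; group
    _ = ξ n * twistedPeriodization μ ξ g z := by
          rw [twistedPeriodization_mul_coe, hξ z n n.2 hconj]

theorem integral_mul_twistedPeriodization_inv_mul [MeasurableMul N] [μ.IsMulLeftInvariant]
    [N.Normal]
    (hξ : ∀ (x s : G) (hs : s ∈ N) (hs' : x⁻¹ * s * x ∈ N), ξ ⟨x⁻¹ * s * x, hs'⟩ = ξ ⟨s, hs⟩)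
    (f g : G → ℂ) (x y : G) :
    ∫ s : N, f (y * s) * twistedPeriodization μ ξ g ((y * s)⁻¹ * x) ∂μ
      = twistedPeriodization μ ξ f y * twistedPeriodization μ ξ g (y⁻¹ * x) := by
  have hshift (s : N) : twistedPeriodization μ ξ g ((y * s)⁻¹ * x)
      = conj (ξ s : ℂ) * twistedPeriodization μ ξ g (y⁻¹ * x) := by
    rw [mul_inv_rev, mul_assoc, ← coe_inv, twistedPeriodization_coe_mul μ ξ hξ, map_inv,
      Circle.coe_inv_eq_conj]
  simp_rw [hshift, ← mul_assoc]
  exact integral_mul_const _ _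

variable [TopologicalSpace G] [IsTopologicalGroup G] [OpensMeasurableSpace G]

theorem continuous_twistedPeriodization [LocallyCompactSpace G] [IsFiniteMeasureOnCompacts μ]
    (hN : IsClosed (N : Set G)) (hξ : Continuous fun s : N => ξ s) {g : G → ℂ}
    (hg : Continuous g) (hgc : HasCompactSupport g) :
    Continuous (twistedPeriodization μ ξ g) := by
  refine continuous_iff_continuousAt.2 fun z₀ => ?_
  obtain ⟨t, ht, ht_nhds⟩ := exists_compact_mem_nhds z₀
  have hk : IsCompact (((↑) : N → G) ⁻¹' (t⁻¹ * tsupport g)) :=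
    hN.isClosedEmbedding_subtypeVal.isCompact_preimage (ht.inv.mul hgc)
  refine (continuousOn_integral_of_compact_support hk ?_ fun z n hz hn => ?_).continuousAt ht_nhds
  · fun_prop
  · suffices g (z * n) = 0 by simp [this]
    refine image_eq_zero_of_notMem_tsupport fun hmem => hn ?_
    simpa using Set.mul_mem_mul (Set.inv_mem_inv.2 hz) hmem

theorem twistedPeriodization_convolution [IsFiniteMeasureOnCompacts μ]
    (hN : IsClosed (N : Set G)) (hξ : Continuous fun s : N => ξ s) (lam : Measure G)
    [IsFiniteMeasureOnCompacts lam] {f g : G → ℂ} (hf : Continuous f) (hfc : HasCompactSupport f)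
    (hg : Continuous g) (hgc : HasCompactSupport g) (x : G) :
    twistedPeriodization μ ξ (fun z => ∫ y, f y * g (y⁻¹ * z) ∂lam) x
      = ∫ y, f y * twistedPeriodization μ ξ g (y⁻¹ * x) ∂lam := by
  set Φ : N → G → ℂ := fun s y => f y * g (y⁻¹ * (x * s)) * conj (ξ s : ℂ)
  have hK : IsCompact (((↑) : N → G) ⁻¹' (x⁻¹ • (tsupport f * tsupport g))) :=
    hN.isClosedEmbedding_subtypeVal.isCompact_preimage ((hfc.mul hgc).smul x⁻¹)
  have hΦ : HasCompactSupport (Function.uncurry Φ) := by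
    have hK_closed : IsClosed (((↑) : N → G) ⁻¹' (x⁻¹ • (tsupport f * tsupport g))) :=
      (((isClosed_tsupport g).mul_left_of_isCompact hfc).smul x⁻¹).preimage continuous_subtype_val
    refine .intro' (hK.prod hfc) (hK_closed.prod (isClosed_tsupport f)) fun ⟨s, y⟩ hsy => ?_
    by_contra hne
    have hf0 : f y ≠ 0 := fun h => hne (by simp [Φ, h])
    have hg0 : g (y⁻¹ * (x * s)) ≠ 0 := fun h => hne (by simp [Φ, h])
    refine hsy ⟨Set.mem_smul_set.2 ⟨x * s, ?_, by simp⟩, subset_tsupport f hf0⟩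
    simpa using Set.mul_mem_mul (subset_tsupport f hf0) (subset_tsupport g hg0)
  calc twistedPeriodization μ ξ (fun z => ∫ y, f y * g (y⁻¹ * z) ∂lam) x
      = ∫ s, ∫ y, Φ s y ∂lam ∂μ := by
        simp only [twistedPeriodization, Φ, integral_mul_const]
    _ = ∫ y, ∫ s, Φ s y ∂μ ∂lam :=
        integral_integral_swap_of_hasCompactSupport (by fun_prop) hΦ
    _ = ∫ y, f y * twistedPeriodization μ ξ g (y⁻¹ * x) ∂lam := by
        simp only [twistedPeriodization, Φ, mul_assoc, integral_const_mul]

end Subgroup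

open Subgroup

theorem Txi_conv_general
    {G : Type*} [Group G] [TopologicalSpace G] [IsTopologicalGroup G]
    [LocallyCompactSpace G] [MeasurableSpace G] [BorelSpace G]
    (lamG : Measure G) [lamG.IsHaarMeasure]
    (N : Subgroup G) [hNrm : N.Normal] (hNc : IsClosed (N : Set G))
    (lamN : Measure ↥N) [lamN.IsHaarMeasure]
    (ν : Measure (G ⧸ N))
    (hWeil : ∀ (f : G → ℂ) (F : G ⧸ N → ℂ), Continuous f → HasCompactSupport f →
      (∀ x : G, F (QuotientGroup.mk x) = ∫ s : ↥N, f (x * (s : G)) ∂lamN) →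
      ∫ ζ, F ζ ∂ν = ∫ x, f x ∂lamG)
    (ξ : N →* Circle) (hξcont : Continuous fun s : ↥N => ξ s)
    (hinv : ∀ (x s : G) (hs : s ∈ N) (hs' : x⁻¹ * s * x ∈ N),
      ξ ⟨x⁻¹ * s * x, hs'⟩ = ξ ⟨s, hs⟩)
    (f g : G → ℂ)
    (hf : Continuous f) (hfc : HasCompactSupport f)
    (hg : Continuous g) (hgc : HasCompactSupport g)
    (x : G) (F : G ⧸ N → ℂ)
    (hF : ∀ y : G, F (QuotientGroup.mk y)
      = (∫ t : ↥N, f (y * (t : G)) * starRingEnd ℂ (ξ t) ∂lamN)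
        * (∫ t : ↥N, g (y⁻¹ * x * (t : G)) * starRingEnd ℂ (ξ t) ∂lamN)) :
    ∫ s : ↥N, (∫ y, f y * g (y⁻¹ * (x * (s : G))) ∂lamG) * starRingEnd ℂ (ξ s) ∂lamN
      = ∫ ζ, F ζ ∂ν := by
  have hTg := continuous_twistedPeriodization lamN ξ hNc hξcont hg hgc
  refine (twistedPeriodization_convolution lamN ξ hNc hξcont lamG hf hfc hg hgc x).trans
    (hWeil (fun y => f y * twistedPeriodization lamN ξ g (y⁻¹ * x)) F ?_ hfc.mul_right
      fun y => ?_).symm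
  · exact hf.mul (hTg.comp (continuous_inv.mul continuous_const))
  · exact (hF y).trans (integral_mul_twistedPeriodization_inv_mul lamN ξ hinv f g x y).symm

/-- `T_ξ (f ∗_G g) = T_ξ f ♮ T_ξ g` for `f, g ∈ C_c(G)` and a `G`-invariant
character `ξ` of a closed normal subgroup `N`. -/
theorem Txi_conv
    {G : Type*} [Group G] [TopologicalSpace G] [IsTopologicalGroup G]
    [LocallyCompactSpace G] [T2Space G] [MeasurableSpace G] [BorelSpace G]
    (lamG : Measure G) [lamG.IsHaarMeasure]
    (N : Subgroup G) [hNrm : N.Normal] (hNc : IsClosed (N : Set G))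
    (lamN : Measure ↥N) [lamN.IsHaarMeasure]
    (ν : Measure (G ⧸ N))
    (hWeil : ∀ (f : G → ℂ) (F : G ⧸ N → ℂ), Continuous f → HasCompactSupport f →
      (∀ x : G, F (QuotientGroup.mk x) = ∫ s : ↥N, f (x * (s : G)) ∂lamN) →
      ∫ ζ, F ζ ∂ν = ∫ x, f x ∂lamG)
    (ξ : N →* Circle) (hξcont : Continuous fun s : ↥N => ξ s)
    (hinv : ∀ (x s : G) (hs : s ∈ N) (hs' : x⁻¹ * s * x ∈ N),
      ξ ⟨x⁻¹ * s * x, hs'⟩ = ξ ⟨s, hs⟩)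
    (f g : G → ℂ)
    (hf : Continuous f) (hfc : HasCompactSupport f)
    (hg : Continuous g) (hgc : HasCompactSupport g)
    (x : G) (F : G ⧸ N → ℂ)
    (hF : ∀ y : G, F (QuotientGroup.mk y)
      = (∫ t : ↥N, f (y * (t : G)) * starRingEnd ℂ (ξ t) ∂lamN)
        * (∫ t : ↥N, g (y⁻¹ * x * (t : G)) * starRingEnd ℂ (ξ t) ∂lamN)) :
    ∫ s : ↥N, (∫ y, f y * g (y⁻¹ * (x * (s : G))) ∂lamG) * starRingEnd ℂ (ξ s) ∂lamN
      = ∫ ζ, F ζ ∂ν :=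
  Txi_conv_general lamG N (hNrm := hNrm) hNc lamN ν hWeil ξ hξcont hinv f g hf hfc hg hgc x F hF
end

section
/- Let G be a locally compact Hausdorff group with left Haar measure λ_G, N a compact normal subgroup equipped with the probability Haar measure λ_N, ν a measure on G/N satisfying Weil's formula, and ξ : N → 𝕋 a G-invariant character. Then for all continuous compactly supported f, g : G → ℂ and all x ∈ G, T_ξ(f ∗_G g)(x) = (T_ξ(f) ∗_G T_ξ(g))(x). -/
/-!
By Fubini, `T_ξ (f ∗ g) x = ∫ f y · T_ξ g (y⁻¹ x) dy`. Since `ξ` is `G`-invariant,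
`T_ξ g (s⁻¹ z) = conj (ξ s) · T_ξ g z` for `s ∈ N`, so the `N`-average of
`y ↦ f y · T_ξ g (y⁻¹ x)` is `T_ξ f y · T_ξ g (y⁻¹ x)`. As `T_ξ` is idempotent, this is also the
`N`-average of `y ↦ T_ξ f y · T_ξ g (y⁻¹ x)`, and functions with equal `N`-averages have equal
integrals by Weil's formula.
-/

open MeasureTheory

open ComplexConjugate

section Twist

variable {G : Type*} [Group G] [MeasurableSpace G] {N : Subgroup G} (lamN : Measure N)
  (ξ : N →* Circle)

noncomputable def Txi (φ : G → ℂ) (z : G) : ℂ :=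
  ∫ t : N, φ (z * t) * conj (ξ t : ℂ) ∂lamN

noncomputable def convolve (lamG : Measure G) (f g : G → ℂ) (x : G) : ℂ :=
  ∫ y, f y * g (y⁻¹ * x) ∂lamG

lemma integral_mul_eq_Txi_mul (φ h : G → ℂ) (hh : ∀ y (s : N), h (y * s) = conj (ξ s : ℂ) * h y)
    (y : G) : ∫ s : N, φ (y * s) * h (y * s) ∂lamN = Txi lamN ξ φ y * h y := by
  rw [Txi, ← integral_mul_const]
  congr 1 with s
  rw [hh]
  ring

variable [TopologicalSpace G] [IsTopologicalGroup G]

lemma continuous_Txi [OpensMeasurableSpace G] [CompactSpace N] [IsFiniteMeasureOnCompacts lamN]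
    (hξ : Continuous fun s : N => ξ s) {φ : G → ℂ} (hφ : Continuous φ) :
    Continuous (Txi lamN ξ φ) := by
  refine continuousOn_univ.mp <|
    continuousOn_integral_of_compact_support isCompact_univ ?_ (by simp)
  exact Continuous.continuousOn (by fun_prop)

lemma hasCompactSupport_Txi [T2Space G] [hN : CompactSpace N] {φ : G → ℂ}
    (hφ : HasCompactSupport φ) : HasCompactSupport (Txi lamN ξ φ) := by
  refine .intro (hφ.mul (isCompact_iff_compactSpace.mpr hN)) fun z hz => ?_
  have hvanish : ∀ t : N, φ (z * t) = 0 := fun t => by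
    by_contra h
    exact hz ⟨z * t, subset_tsupport φ h, (t : G)⁻¹, N.inv_mem t.2, mul_inv_cancel_right z t⟩
  simp only [Txi, hvanish, zero_mul, integral_zero]

lemma Txi_convolve_eq_integral_mul_Txi [OpensMeasurableSpace G] [CompactSpace N]
    [IsFiniteMeasureOnCompacts lamN] (lamG : Measure G) [IsFiniteMeasureOnCompacts lamG]
    (hξ : Continuous fun s : N => ξ s)
    {f g : G → ℂ} (hf : Continuous f) (hfc : HasCompactSupport f) (hg : Continuous g) (x : G) :
    Txi lamN ξ (convolve lamG f g) x = ∫ y, f y * Txi lamN ξ g (y⁻¹ * x) ∂lamG := by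
  calc Txi lamN ξ (convolve lamG f g) x
      = ∫ t : N, ∫ y, f y * (g (y⁻¹ * x * t) * conj (ξ t : ℂ)) ∂lamG ∂lamN := by
        simp only [Txi, convolve, ← integral_mul_const, mul_assoc]
    _ = ∫ y, ∫ t : N, f y * (g (y⁻¹ * x * t) * conj (ξ t : ℂ)) ∂lamN ∂lamG := by
        refine integral_integral_swap_of_hasCompactSupport (by fun_prop) ?_
        refine .intro' (isCompact_univ.prod hfc) (isClosed_univ.prod (isClosed_tsupport f)) ?_
        rintro ⟨t, y⟩ hty
        have hy : y ∉ tsupport f := fun hy => hty ⟨trivial, hy⟩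
        simp [image_eq_zero_of_notMem_tsupport hy]
    _ = ∫ y, f y * Txi lamN ξ g (y⁻¹ * x) ∂lamG := by
        simp only [integral_const_mul, Txi]

variable [BorelSpace G] [lamN.IsMulLeftInvariant]

lemma Txi_mul_mem (φ : G → ℂ) (z : G) (u : N) :
    Txi lamN ξ φ (z * u) = ξ u * Txi lamN ξ φ z := by
  calc Txi lamN ξ φ (z * u)
      = ∫ t : N, (fun t : N => φ (z * t) * conj (ξ (u⁻¹ * t) : ℂ)) (u * t) ∂lamN := by
        simp only [Txi, inv_mul_cancel_left, Subgroup.coe_mul, mul_assoc]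
    _ = ∫ t : N, φ (z * t) * conj (ξ (u⁻¹ * t) : ℂ) ∂lamN :=
        integral_mul_left_eq_self (μ := lamN) (fun t => φ (z * t) * conj (ξ (u⁻¹ * t) : ℂ)) u
    _ = ξ u * Txi lamN ξ φ z := by
        rw [Txi, ← integral_const_mul]
        congr 1 with t
        rw [map_mul, Circle.coe_mul, map_mul, map_inv, Circle.coe_inv_eq_conj, Complex.conj_conj]
        ring

lemma Txi_mem_mul [hN : N.Normal]
    (hinv : ∀ (x s : G) (hs : s ∈ N) (hs' : x⁻¹ * s * x ∈ N),
      ξ ⟨x⁻¹ * s * x, hs'⟩ = ξ ⟨s, hs⟩)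
    (φ : G → ℂ) (z : G) (u : N) :
    Txi lamN ξ φ (u * z) = ξ u * Txi lamN ξ φ z := by
  have hconj : z⁻¹ * u * z ∈ N := by simpa using hN.conj_mem u u.2 z⁻¹
  calc Txi lamN ξ φ (u * z) = Txi lamN ξ φ (z * (⟨z⁻¹ * u * z, hconj⟩ : N)) := by simp [mul_assoc]
    _ = ξ u * Txi lamN ξ φ z := by rw [Txi_mul_mem, hinv z u u.2 hconj]

lemma Txi_mul_inv_mul [N.Normal]
    (hinv : ∀ (x s : G) (hs : s ∈ N) (hs' : x⁻¹ * s * x ∈ N),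
      ξ ⟨x⁻¹ * s * x, hs'⟩ = ξ ⟨s, hs⟩)
    (φ : G → ℂ) (x y : G) (s : N) :
    Txi lamN ξ φ ((y * s)⁻¹ * x) = conj (ξ s : ℂ) * Txi lamN ξ φ (y⁻¹ * x) := by
  rw [mul_inv_rev, mul_assoc, ← Subgroup.coe_inv, Txi_mem_mul lamN ξ hinv, map_inv,
    Circle.coe_inv_eq_conj]

lemma Txi_Txi [IsProbabilityMeasure lamN] (φ : G → ℂ) :
    Txi lamN ξ (Txi lamN ξ φ) = Txi lamN ξ φ := by
  ext z
  calc Txi lamN ξ (Txi lamN ξ φ) z = ∫ t : N, Txi lamN ξ φ z * (ξ t * conj (ξ t : ℂ)) ∂lamN := by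
        rw [Txi]
        congr 1 with t
        rw [Txi_mul_mem]
        ring
    _ = Txi lamN ξ φ z := by
        simp [← Circle.coe_inv_eq_conj]

end Twist

section Weil

variable {G : Type*} [Group G] [TopologicalSpace G] [MeasurableSpace G] {N : Subgroup G}

def WeilFormula (lamG : Measure G) (lamN : Measure N) (ν : Measure (G ⧸ N)) : Prop :=
  ∀ (f : G → ℂ) (F : G ⧸ N → ℂ), Continuous f → HasCompactSupport f →
    (∀ x : G, F (QuotientGroup.mk x) = ∫ s : N, f (x * s) ∂lamN) → ∫ ζ, F ζ ∂ν = ∫ x, f x ∂lamG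

lemma WeilFormula.integral_eq_of_forall_average_eq [IsTopologicalGroup G] [BorelSpace G]
    {lamG : Measure G} {lamN : Measure N} [lamN.IsMulLeftInvariant] {ν : Measure (G ⧸ N)}
    (hW : WeilFormula lamG lamN ν) {φ ψ : G → ℂ} (hφ : Continuous φ) (hφc : HasCompactSupport φ)
    (hψ : Continuous ψ) (hψc : HasCompactSupport ψ)
    (h : ∀ y, ∫ s : N, φ (y * s) ∂lamN = ∫ s : N, ψ (y * s) ∂lamN) :
    ∫ y, φ y ∂lamG = ∫ y, ψ y ∂lamG := by
  -- `F` reads `φ` off a chosen coset representative; left invariance of `lamN` removes the choice.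
  let F : G ⧸ N → ℂ := fun ζ => ∫ s : N, φ (ζ.out * s) ∂lamN
  have hF : ∀ y : G, F y = ∫ s : N, φ (y * s) ∂lamN := fun y => by
    obtain ⟨n, hn⟩ := QuotientGroup.mk_out_eq_mul N y
    simpa only [F, hn, Subgroup.coe_mul, mul_assoc] using
      integral_mul_left_eq_self (μ := lamN) (fun s : N => φ (y * s)) n
  rw [← hW φ F hφ hφc hF, hW ψ F hψ hψc fun y => (hF y).trans (h y)]

end Weil

theorem Txi_conv_compact_probability_general
    {G : Type*} [Group G] [TopologicalSpace G] [IsTopologicalGroup G]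
    [T2Space G] [MeasurableSpace G] [BorelSpace G]
    (lamG : Measure G) [lamG.IsHaarMeasure]
    (N : Subgroup G) [hNrm : N.Normal] (hNcpt : IsCompact (N : Set G))
    (lamN : Measure ↥N) [lamN.IsHaarMeasure] [IsProbabilityMeasure lamN]
    (ν : Measure (G ⧸ N))
    (hWeil : ∀ (f : G → ℂ) (F : G ⧸ N → ℂ), Continuous f → HasCompactSupport f →
      (∀ x : G, F (QuotientGroup.mk x) = ∫ s : ↥N, f (x * (s : G)) ∂lamN) →
      ∫ ζ, F ζ ∂ν = ∫ x, f x ∂lamG)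
    (ξ : N →* Circle) (hξcont : Continuous fun s : ↥N => ξ s)
    (hinv : ∀ (x s : G) (hs : s ∈ N) (hs' : x⁻¹ * s * x ∈ N),
      ξ ⟨x⁻¹ * s * x, hs'⟩ = ξ ⟨s, hs⟩)
    (f g : G → ℂ)
    (hf : Continuous f) (hfc : HasCompactSupport f)
    (hg : Continuous g)
    (x : G) :
    ∫ s : ↥N, (∫ y, f y * g (y⁻¹ * (x * (s : G))) ∂lamG) * starRingEnd ℂ (ξ s) ∂lamN
      = ∫ y, (∫ t : ↥N, f (y * (t : G)) * starRingEnd ℂ (ξ t) ∂lamN)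
          * (∫ t : ↥N, g (y⁻¹ * x * (t : G)) * starRingEnd ℂ (ξ t) ∂lamN) ∂lamG := by
  have := isCompact_iff_compactSpace.mp hNcpt
  have hTg : Continuous fun y => Txi lamN ξ g (y⁻¹ * x) :=
    (continuous_Txi lamN ξ hξcont hg).comp (by fun_prop)
  have htwist : ∀ (y : G) (s : N),
      Txi lamN ξ g ((y * s)⁻¹ * x) = conj (ξ s : ℂ) * Txi lamN ξ g (y⁻¹ * x) :=
    Txi_mul_inv_mul lamN ξ hinv g x
  change Txi lamN ξ (convolve lamG f g) x = convolve lamG (Txi lamN ξ f) (Txi lamN ξ g) x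
  rw [Txi_convolve_eq_integral_mul_Txi lamN ξ lamG hξcont hf hfc hg]
  refine WeilFormula.integral_eq_of_forall_average_eq hWeil (hf.mul hTg) hfc.mul_right
    ((continuous_Txi lamN ξ hξcont hf).mul hTg) (hasCompactSupport_Txi lamN ξ hfc).mul_right
    fun y => ?_
  have haverage (φ : G → ℂ) :=
    integral_mul_eq_Txi_mul lamN ξ φ (fun y => Txi lamN ξ g (y⁻¹ * x)) htwist y
  rw [haverage, haverage, Txi_Txi]

/-- If `N` is a compact normal subgroup with the probability Haar measure
`λ_N`, then `T_ξ (f ∗_G g) = T_ξ f ∗_G T_ξ g` for `f, g ∈ C_c(G)`. -/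
theorem Txi_conv_compact_probability
    {G : Type*} [Group G] [TopologicalSpace G] [IsTopologicalGroup G]
    [LocallyCompactSpace G] [T2Space G] [MeasurableSpace G] [BorelSpace G]
    (lamG : Measure G) [lamG.IsHaarMeasure]
    (N : Subgroup G) [hNrm : N.Normal] (hNcpt : IsCompact (N : Set G))
    (lamN : Measure ↥N) [lamN.IsHaarMeasure] [IsProbabilityMeasure lamN]
    (ν : Measure (G ⧸ N))
    (hWeil : ∀ (f : G → ℂ) (F : G ⧸ N → ℂ), Continuous f → HasCompactSupport f →
      (∀ x : G, F (QuotientGroup.mk x) = ∫ s : ↥N, f (x * (s : G)) ∂lamN) →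
      ∫ ζ, F ζ ∂ν = ∫ x, f x ∂lamG)
    (ξ : N →* Circle) (hξcont : Continuous fun s : ↥N => ξ s)
    (hinv : ∀ (x s : G) (hs : s ∈ N) (hs' : x⁻¹ * s * x ∈ N),
      ξ ⟨x⁻¹ * s * x, hs'⟩ = ξ ⟨s, hs⟩)
    (f g : G → ℂ)
    (hf : Continuous f) (hfc : HasCompactSupport f)
    (hg : Continuous g) (hgc : HasCompactSupport g)
    (x : G) :
    ∫ s : ↥N, (∫ y, f y * g (y⁻¹ * (x * (s : G))) ∂lamG) * starRingEnd ℂ (ξ s) ∂lamN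
      = ∫ y, (∫ t : ↥N, f (y * (t : G)) * starRingEnd ℂ (ξ t) ∂lamN)
          * (∫ t : ↥N, g (y⁻¹ * x * (t : G)) * starRingEnd ℂ (ξ t) ∂lamN) ∂lamG :=
  Txi_conv_compact_probability_general lamG N (hNrm := hNrm) hNcpt lamN ν hWeil ξ hξcont hinv f g hf
    hfc hg x
end

section
/- Let G be a locally compact Hausdorff group with left Haar measure λ_G, N a closed normal subgroup with left Haar measure λ_N, ν a measure on G/N satisfying Weil's formula, and ξ : N → 𝕋 a G-invariant character. If f, g : G → ℂ are continuous and compactly supported and either T_ξ(f) = 0 identically or T_ξ(g) = 0 identically, then T_ξ(f ∗_G g) = 0 identically; that is, the kernel of T_ξ on C_c(G) is a two-sided ideal for convolution. -/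
/-!
By Fubini, `T_ξ (f ∗ g) x = ∫ f y * T_ξ g (y⁻¹ x) dy`, which settles the case `T_ξ g = 0`.
The `G`-invariance of `ξ` makes `T_ξ g` transform like `conj ξ` under `N`:
`T_ξ g (t⁻¹ u) = conj (ξ t) * T_ξ g u`. Hence the `N`-periodization of
`y ↦ f y * T_ξ g (y⁻¹ x)` is `z ↦ T_ξ f z * T_ξ g (z⁻¹ x)`, which vanishes when `T_ξ f = 0`,
and Weil's formula turns this into the vanishing of the integral over `G`.
-/

open MeasureTheory ComplexConjugate

section TwistedPeriodization

variable {G : Type*} [Group G] [MeasurableSpace G] {N : Subgroup G} (lamN : Measure N)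
  (ξ : N →* Circle)

/-- The operator `T_ξ`. -/
noncomputable def twistedPeriodization (f : G → ℂ) (x : G) : ℂ :=
  ∫ s : N, f (x * s) * conj (ξ s : ℂ) ∂lamN

theorem twistedPeriodization_inv_mul [N.Normal] [MeasurableMul N] [lamN.IsMulLeftInvariant]
    (hinv : ∀ (x s : G) (hs : s ∈ N) (hs' : x⁻¹ * s * x ∈ N),
      ξ ⟨x⁻¹ * s * x, hs'⟩ = ξ ⟨s, hs⟩) (g : G → ℂ) (u : G) (t : N) :
    twistedPeriodization lamN ξ g ((t : G)⁻¹ * u)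
      = conj (ξ t : ℂ) * twistedPeriodization lamN ξ g u := by
  let c : N := ⟨u⁻¹ * t * u, by simpa using Subgroup.Normal.conj_mem ‹_› _ t.2 u⁻¹⟩
  have hc : ξ c = ξ t := hinv u t t.2 c.2
  rw [twistedPeriodization, ← integral_mul_left_eq_self _ c, twistedPeriodization,
    ← integral_const_mul]
  congr 1 with s
  have hcs : (t : G)⁻¹ * u * ((c * s : N) : G) = u * s := by simp [c]; group
  simp only [hcs, map_mul, hc, Circle.coe_mul]
  ring

theorem integral_mul_twistedPeriodization_inv_mul [N.Normal] [MeasurableMul N]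
    [lamN.IsMulLeftInvariant]
    (hinv : ∀ (x s : G) (hs : s ∈ N) (hs' : x⁻¹ * s * x ∈ N),
      ξ ⟨x⁻¹ * s * x, hs'⟩ = ξ ⟨s, hs⟩) (f g : G → ℂ) (z x : G) :
    ∫ t : N, f (z * t) * twistedPeriodization lamN ξ g ((z * t)⁻¹ * x) ∂lamN
      = twistedPeriodization lamN ξ f z * twistedPeriodization lamN ξ g (z⁻¹ * x) := by
  simp_rw [mul_inv_rev, mul_assoc, twistedPeriodization_inv_mul lamN ξ hinv g]
  rw [twistedPeriodization.eq_1 lamN ξ f z, ← integral_mul_const]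
  congr 1 with t
  ring

variable [TopologicalSpace G] [IsTopologicalGroup G] [BorelSpace G]

theorem continuous_twistedPeriodization [LocallyCompactSpace G] [IsFiniteMeasureOnCompacts lamN]
    (hNc : IsClosed (N : Set G)) (hξ : Continuous fun s : N => ξ s) {g : G → ℂ}
    (hg : Continuous g) (hgc : HasCompactSupport g) :
    Continuous (twistedPeriodization lamN ξ g) := by
  rw [continuous_iff_continuousAt]
  intro u₀
  obtain ⟨t, ht, ht_nhds⟩ := exists_compact_mem_nhds u₀
  refine ContinuousOn.continuousAt ?_ ht_nhds
  refine continuousOn_integral_of_compact_support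
    (hNc.isClosedEmbedding_subtypeVal.isCompact_preimage (ht.inv.mul hgc))
    (by fun_prop : Continuous _).continuousOn fun u s hu hs => ?_
  have hus : u * s ∉ tsupport g := fun hmem => hs <| by
    simpa using Set.mul_mem_mul (Set.inv_mem_inv.2 hu) hmem
  simp [image_eq_zero_of_notMem_tsupport hus]

theorem twistedPeriodization_convolution (lamG : Measure G) [IsFiniteMeasureOnCompacts lamG]
    [IsFiniteMeasureOnCompacts lamN] (hNc : IsClosed (N : Set G))
    (hξ : Continuous fun s : N => ξ s) {f g : G → ℂ} (hf : Continuous f)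
    (hfc : HasCompactSupport f) (hg : Continuous g) (hgc : HasCompactSupport g) (x : G) :
    twistedPeriodization lamN ξ (fun z => ∫ y, f y * g (y⁻¹ * z) ∂lamG) x
      = ∫ y, f y * twistedPeriodization lamN ξ g (y⁻¹ * x) ∂lamG := by
  have hsupp : HasCompactSupport (Function.uncurry fun (s : N) (y : G) =>
      f y * (g (y⁻¹ * (x * s)) * conj (ξ s : ℂ))) := by
    refine HasCompactSupport.intro ((hNc.isClosedEmbedding_subtypeVal.isCompact_preimage
      ((hfc.prod hgc).image (f := fun p : G × G => x⁻¹ * p.1 * p.2) (by fun_prop))).prod hfc) ?_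
    rintro ⟨s, y⟩ hsy
    simp only [Set.mem_prod, Set.mem_preimage, not_and_or] at hsy
    by_cases hy : y ∈ tsupport f
    · have hg0 : g (y⁻¹ * (x * s)) = 0 := image_eq_zero_of_notMem_tsupport fun hmem =>
        hsy.resolve_right (not_not.2 hy) ⟨(y, _), ⟨hy, hmem⟩, by group⟩
      simp [hg0]
    · simp [image_eq_zero_of_notMem_tsupport hy]
  calc twistedPeriodization lamN ξ (fun z => ∫ y, f y * g (y⁻¹ * z) ∂lamG) x
      = ∫ s : N, ∫ y, f y * (g (y⁻¹ * (x * s)) * conj (ξ s : ℂ)) ∂lamG ∂lamN := by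
        simp only [twistedPeriodization, ← integral_mul_const, mul_assoc]
    _ = ∫ y, ∫ s : N, f y * (g (y⁻¹ * (x * s)) * conj (ξ s : ℂ)) ∂lamN ∂lamG :=
        integral_integral_swap_of_hasCompactSupport (by fun_prop) hsupp
    _ = _ := by simp only [twistedPeriodization, integral_const_mul, mul_assoc]

end TwistedPeriodization

theorem Txi_kernel_ideal_general
    {G : Type*} [Group G] [TopologicalSpace G] [IsTopologicalGroup G]
    [LocallyCompactSpace G] [MeasurableSpace G] [BorelSpace G]
    (lamG : Measure G) [lamG.IsHaarMeasure]
    (N : Subgroup G) [hNrm : N.Normal] (hNc : IsClosed (N : Set G))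
    (lamN : Measure ↥N) [lamN.IsHaarMeasure]
    (ν : Measure (G ⧸ N))
    (hWeil : ∀ (f : G → ℂ) (F : G ⧸ N → ℂ), Continuous f → HasCompactSupport f →
      (∀ x : G, F (QuotientGroup.mk x) = ∫ s : ↥N, f (x * (s : G)) ∂lamN) →
      ∫ ζ, F ζ ∂ν = ∫ x, f x ∂lamG)
    (ξ : N →* Circle) (hξcont : Continuous fun s : ↥N => ξ s)
    (hinv : ∀ (x s : G) (hs : s ∈ N) (hs' : x⁻¹ * s * x ∈ N),
      ξ ⟨x⁻¹ * s * x, hs'⟩ = ξ ⟨s, hs⟩)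
    (f g : G → ℂ)
    (hf : Continuous f) (hfc : HasCompactSupport f)
    (hg : Continuous g) (hgc : HasCompactSupport g)
    (hker : (∀ x : G, ∫ s : ↥N, f (x * (s : G)) * starRingEnd ℂ (ξ s) ∂lamN = 0)
      ∨ (∀ x : G, ∫ s : ↥N, g (x * (s : G)) * starRingEnd ℂ (ξ s) ∂lamN = 0)) :
    ∀ x : G,
      ∫ s : ↥N, (∫ y, f y * g (y⁻¹ * (x * (s : G))) ∂lamG) * starRingEnd ℂ (ξ s) ∂lamN
        = 0 := by
  intro x
  refine (twistedPeriodization_convolution lamN ξ lamG hNc hξcont hf hfc hg hgc x).trans ?_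
  rcases hker with hf0 | hg0
  · have hTg := continuous_twistedPeriodization lamN ξ hNc hξcont hg hgc
    rw [← hWeil (fun y => f y * twistedPeriodization lamN ξ g (y⁻¹ * x)) (fun _ => 0) (by fun_prop)
      hfc.mul_right fun z => ?_, integral_zero]
    rw [integral_mul_twistedPeriodization_inv_mul lamN ξ hinv, twistedPeriodization, hf0 z,
      zero_mul]
  · simp only [hg0 _, twistedPeriodization, mul_zero, integral_zero]

/-- The kernel of `T_ξ` on `C_c(G)` is a two-sided ideal for convolution:
if `T_ξ f = 0` or `T_ξ g = 0`, then `T_ξ (f ∗_G g) = 0`. -/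
theorem Txi_kernel_ideal
    {G : Type*} [Group G] [TopologicalSpace G] [IsTopologicalGroup G]
    [LocallyCompactSpace G] [T2Space G] [MeasurableSpace G] [BorelSpace G]
    (lamG : Measure G) [lamG.IsHaarMeasure]
    (N : Subgroup G) [hNrm : N.Normal] (hNc : IsClosed (N : Set G))
    (lamN : Measure ↥N) [lamN.IsHaarMeasure]
    (ν : Measure (G ⧸ N))
    (hWeil : ∀ (f : G → ℂ) (F : G ⧸ N → ℂ), Continuous f → HasCompactSupport f →
      (∀ x : G, F (QuotientGroup.mk x) = ∫ s : ↥N, f (x * (s : G)) ∂lamN) →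
      ∫ ζ, F ζ ∂ν = ∫ x, f x ∂lamG)
    (ξ : N →* Circle) (hξcont : Continuous fun s : ↥N => ξ s)
    (hinv : ∀ (x s : G) (hs : s ∈ N) (hs' : x⁻¹ * s * x ∈ N),
      ξ ⟨x⁻¹ * s * x, hs'⟩ = ξ ⟨s, hs⟩)
    (f g : G → ℂ)
    (hf : Continuous f) (hfc : HasCompactSupport f)
    (hg : Continuous g) (hgc : HasCompactSupport g)
    (hker : (∀ x : G, ∫ s : ↥N, f (x * (s : G)) * starRingEnd ℂ (ξ s) ∂lamN = 0)
      ∨ (∀ x : G, ∫ s : ↥N, g (x * (s : G)) * starRingEnd ℂ (ξ s) ∂lamN = 0)) :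
    ∀ x : G,
      ∫ s : ↥N, (∫ y, f y * g (y⁻¹ * (x * (s : G))) ∂lamG) * starRingEnd ℂ (ξ s) ∂lamN
        = 0 :=
  Txi_kernel_ideal_general lamG N (hNrm := hNrm) hNc lamN ν hWeil ξ hξcont hinv f g hf hfc hg hgc
    hker
end

section
/- Let G be a locally compact Hausdorff group with left Haar measure λ_G and modular function Δ_G, and N a closed normal subgroup with left Haar measure λ_N, modular function Δ_N, and Δ_G restricted to N equal to Δ_N. Let σ_N : G → (0,∞) be the homomorphism with ∫_N v(x s x⁻¹) dλ_N(s) = σ_N(x) ∫_N v dλ_N for all v ∈ C_c(N), and assume the inversion formula ∫_N v(s⁻¹) Δ_N(s⁻¹) dλ_N(s) = ∫_N v dλ_N holds for v ∈ C_c(N). Then for every G-invariant character ξ : N → 𝕋, every continuous compactly supported f : G → ℂ, and every x ∈ G, T_ξ(f^{∗G})(x) = Δ_G(x⁻¹) σ_N(x) conj(T_ξ(f)(x⁻¹)). -/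
/-!
Substituting `s ↦ s⁻¹` in `T_ξ(f^{∗G})(x) = ∫_N Δ_G(s⁻¹x⁻¹) conj f(s⁻¹x⁻¹) conj ξ(s) ds`,
and using that `Δ_G` is multiplicative with `Δ_G|_N = Δ_N` and that `conj ξ(s) = ξ(s⁻¹)`,
the inversion formula turns it into `Δ_G(x⁻¹) ∫_N conj f(s x⁻¹) ξ(s) ds`. The change of
variables `s ↦ x s x⁻¹`, under which `ξ` is invariant and `λ_N` scales by `σ_N(x)`, rewrites
the last integral as `σ_N(x) ∫_N conj f(x⁻¹ s) ξ(s) ds = σ_N(x) conj(T_ξ(f)(x⁻¹))`.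
-/

open MeasureTheory ComplexConjugate

section ModularFunction

variable {G : Type*} [Group G] [TopologicalSpace G] [IsTopologicalGroup G]
  [LocallyCompactSpace G] [MeasurableSpace G] [BorelSpace G]

lemma exists_continuous_hasCompactSupport_integral_ne_zero
    (μ : Measure G) [μ.IsHaarMeasure] :
    ∃ h : G → ℂ, Continuous h ∧ HasCompactSupport h ∧ ∫ y, h y ∂μ ≠ 0 := by
  obtain ⟨g, hgc, hg_nonneg, hg1⟩ := exists_continuous_nonneg_pos (1 : G)
  refine ⟨fun y => (g y : ℂ), by fun_prop, hgc.comp_left Complex.ofReal_zero, ?_⟩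
  rw [integral_complex_ofReal, Complex.ofReal_ne_zero]
  exact (g.continuous.integral_pos_of_hasCompactSupport_nonneg_nonzero hgc hg_nonneg hg1).ne'

lemma map_mul_of_integral_comp_mul_right (μ : Measure G) [μ.IsHaarMeasure] (Δ : G → ℝ)
    (hΔ : ∀ (f : G → ℂ), Continuous f → HasCompactSupport f → ∀ t : G,
      ∫ x, f (x * t) ∂μ = ((Δ t)⁻¹ : ℂ) * ∫ x, f x ∂μ)
    (a b : G) : Δ (a * b) = Δ a * Δ b := by
  obtain ⟨h, hc, hs, hint⟩ := exists_continuous_hasCompactSupport_integral_ne_zero μ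
  have hinv : (Δ (a * b) : ℂ)⁻¹ = (Δ a : ℂ)⁻¹ * (Δ b : ℂ)⁻¹ := by
    refine mul_right_cancel₀ hint ?_
    calc (Δ (a * b) : ℂ)⁻¹ * ∫ y, h y ∂μ
        = ∫ y, h (y * a * b) ∂μ := by simp only [mul_assoc, hΔ h hc hs]
      _ = (Δ a : ℂ)⁻¹ * ∫ y, h (y * b) ∂μ :=
          hΔ (fun y => h (y * b)) (by fun_prop) (hs.comp_homeomorph (Homeomorph.mulRight b)) a
      _ = (Δ a : ℂ)⁻¹ * (Δ b : ℂ)⁻¹ * ∫ y, h y ∂μ := by rw [hΔ h hc hs, mul_assoc]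
  rw [← mul_inv, inv_inj] at hinv
  exact_mod_cast hinv

end ModularFunction

lemma Subgroup.Normal.apply_conj_eq_of_forall_apply_inv_conj {G α : Type*} [Group G]
    {N : Subgroup G} (hN : N.Normal) (ξ : N → α)
    (hinv : ∀ (x s : G) (hs : s ∈ N) (hs' : x⁻¹ * s * x ∈ N), ξ ⟨x⁻¹ * s * x, hs'⟩ = ξ ⟨s, hs⟩)
    (x : G) (s : N) : ξ ⟨x * s * x⁻¹, hN.conj_mem s s.2 x⟩ = ξ s := by
  simpa only [inv_inv] using hinv x⁻¹ s s.2 (by simpa using hN.conj_mem s s.2 x)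

section Twist

variable {G : Type*} [Group G] [TopologicalSpace G] [IsTopologicalGroup G] [MeasurableSpace G]
  {N : Subgroup G} {lamN : Measure N} {ξ : N →* Circle} {f : G → ℂ}

lemma integral_modular_mul_conj_inv_eq (hNc : IsClosed (N : Set G))
    (ΔG : G → ℝ) (hΔG_mul : ∀ a b, ΔG (a * b) = ΔG a * ΔG b) (ΔN : N → ℝ)
    (hrestr : ∀ s : N, ΔG s = ΔN s)
    (hinvN : ∀ (v : N → ℂ), Continuous v → HasCompactSupport v →
      ∫ s : N, v s⁻¹ * ((ΔN s⁻¹ : ℝ) : ℂ) ∂lamN = ∫ s : N, v s ∂lamN)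
    (hξcont : Continuous fun s : N => ξ s) (hf : Continuous f) (hfc : HasCompactSupport f)
    (x : G) :
    ∫ s : N, (ΔG (x * s)⁻¹ : ℂ) * conj (f (x * s)⁻¹) * conj (ξ s : ℂ) ∂lamN
      = (ΔG x⁻¹ : ℂ) * ∫ s : N, conj (f (s * x⁻¹)) * ξ s ∂lamN := by
  let w : N → ℂ := fun s => conj (f (s * x⁻¹)) * ξ s
  have hw : HasCompactSupport w :=
    ((hfc.comp_homeomorph (Homeomorph.mulRight x⁻¹)).comp_left (map_zero conj)
      |>.comp_isClosedEmbedding hNc.isClosedEmbedding_subtypeVal).mul_right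
  rw [← hinvN w (by fun_prop) hw, ← integral_const_mul]
  congr 1 with s
  have hΔ : ΔG ((s : G)⁻¹ * x⁻¹) = ΔN s⁻¹ * ΔG x⁻¹ := by
    rw [hΔG_mul, ← hrestr, InvMemClass.coe_inv]
  simp only [w, mul_inv_rev, hΔ, map_inv, Circle.coe_inv_eq_conj, InvMemClass.coe_inv]
  push_cast
  ring

lemma integral_conj_mul_eq_mul_conj_integral (hN : N.Normal) (hNc : IsClosed (N : Set G))
    (σ : G → ℝ)
    (hσ : ∀ (x : G) (v : N → ℂ), Continuous v → HasCompactSupport v →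
      ∫ s : N, v ⟨x * s * x⁻¹, hN.conj_mem s s.2 x⟩ ∂lamN = (σ x : ℂ) * ∫ s : N, v s ∂lamN)
    (hinv : ∀ (x s : G) (hs : s ∈ N) (hs' : x⁻¹ * s * x ∈ N),
      ξ ⟨x⁻¹ * s * x, hs'⟩ = ξ ⟨s, hs⟩)
    (hξcont : Continuous fun s : N => ξ s) (hf : Continuous f) (hfc : HasCompactSupport f)
    (x : G) :
    ∫ s : N, conj (f (s * x⁻¹)) * ξ s ∂lamN
      = (σ x : ℂ) * conj (∫ s : N, f (x⁻¹ * s) * conj (ξ s : ℂ) ∂lamN) := by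
  let w : N → ℂ := fun s => conj (f (x⁻¹ * s)) * ξ s
  have hw : HasCompactSupport w :=
    ((hfc.comp_homeomorph (Homeomorph.mulLeft x⁻¹)).comp_left (map_zero conj)
      |>.comp_isClosedEmbedding hNc.isClosedEmbedding_subtypeVal).mul_right
  calc ∫ s : N, conj (f (s * x⁻¹)) * ξ s ∂lamN
      = ∫ s : N, w ⟨x * s * x⁻¹, hN.conj_mem s s.2 x⟩ ∂lamN := by
        congr 1 with s
        simp only [w, hN.apply_conj_eq_of_forall_apply_inv_conj ξ hinv]
        group
    _ = (σ x : ℂ) * ∫ s : N, w s ∂lamN := hσ x w (by fun_prop) hw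
    _ = (σ x : ℂ) * conj (∫ s : N, f (x⁻¹ * s) * conj (ξ s : ℂ) ∂lamN) := by
        simp [w, ← integral_conj]

end Twist

theorem Txi_involution_general
    {G : Type*} [Group G] [TopologicalSpace G] [IsTopologicalGroup G]
    [LocallyCompactSpace G] [MeasurableSpace G] [BorelSpace G]
    (lamG : Measure G) [lamG.IsHaarMeasure]
    (N : Subgroup G) (hNrm : N.Normal) (hNc : IsClosed (N : Set G))
    (lamN : Measure ↥N)
    (ΔG : G → ℝ)
    (hΔG : ∀ (f : G → ℂ), Continuous f → HasCompactSupport f → ∀ t : G,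
      ∫ x, f (x * t) ∂lamG = ((ΔG t)⁻¹ : ℂ) * ∫ x, f x ∂lamG)
    (ΔN : ↥N → ℝ)
    (hrestr : ∀ s : ↥N, ΔG (s : G) = ΔN s)
    (σ : G → ℝ)
    (hσ : ∀ (x : G) (v : ↥N → ℂ), Continuous v → HasCompactSupport v →
      ∫ s : ↥N, v ⟨x * (s : G) * x⁻¹, hNrm.conj_mem (s : G) s.2 x⟩ ∂lamN
        = (σ x : ℂ) * ∫ s : ↥N, v s ∂lamN)
    (hinvN : ∀ (v : ↥N → ℂ), Continuous v → HasCompactSupport v →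
      ∫ s : ↥N, v s⁻¹ * ((ΔN s⁻¹ : ℝ) : ℂ) ∂lamN = ∫ s : ↥N, v s ∂lamN)
    (ξ : N →* Circle) (hξcont : Continuous fun s : ↥N => ξ s)
    (hinv : ∀ (x s : G) (hs : s ∈ N) (hs' : x⁻¹ * s * x ∈ N),
      ξ ⟨x⁻¹ * s * x, hs'⟩ = ξ ⟨s, hs⟩)
    (f : G → ℂ) (hf : Continuous f) (hfc : HasCompactSupport f) (x : G) :
    ∫ s : ↥N, ((ΔG ((x * (s : G))⁻¹) : ℝ) : ℂ) * starRingEnd ℂ (f ((x * (s : G))⁻¹))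
        * starRingEnd ℂ (ξ s) ∂lamN
      = ((ΔG x⁻¹ : ℝ) : ℂ) * ((σ x : ℝ) : ℂ)
        * starRingEnd ℂ (∫ s : ↥N, f (x⁻¹ * (s : G)) * starRingEnd ℂ (ξ s) ∂lamN) := by
  have hΔG_mul := map_mul_of_integral_comp_mul_right lamG ΔG hΔG
  rw [integral_modular_mul_conj_inv_eq hNc ΔG hΔG_mul ΔN hrestr hinvN hξcont hf hfc x,
    integral_conj_mul_eq_mul_conj_integral hNrm hNc σ hσ hinv hξcont hf hfc x, mul_assoc]

/-- `T_ξ (f^{∗G}) x = Δ_G x⁻¹ · σ_N x · conj (T_ξ f x⁻¹)`, i.e.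
`T_ξ` intertwines the involution of `L¹(G)` with the covariant involution. -/
theorem Txi_involution
    {G : Type*} [Group G] [TopologicalSpace G] [IsTopologicalGroup G]
    [LocallyCompactSpace G] [T2Space G] [MeasurableSpace G] [BorelSpace G]
    (lamG : Measure G) [lamG.IsHaarMeasure]
    (N : Subgroup G) (hNrm : N.Normal) (hNc : IsClosed (N : Set G))
    (lamN : Measure ↥N) [lamN.IsHaarMeasure]
    (ΔG : G → ℝ) (hΔGpos : ∀ x, 0 < ΔG x)
    (hΔG : ∀ (f : G → ℂ), Continuous f → HasCompactSupport f → ∀ t : G,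
      ∫ x, f (x * t) ∂lamG = ((ΔG t)⁻¹ : ℂ) * ∫ x, f x ∂lamG)
    (ΔN : ↥N → ℝ) (hΔNpos : ∀ s, 0 < ΔN s)
    (hΔN : ∀ (v : ↥N → ℂ), Continuous v → HasCompactSupport v → ∀ t : ↥N,
      ∫ s, v (s * t) ∂lamN = ((ΔN t)⁻¹ : ℂ) * ∫ s, v s ∂lamN)
    (hrestr : ∀ s : ↥N, ΔG (s : G) = ΔN s)
    (σ : G → ℝ)
    (hσ : ∀ (x : G) (v : ↥N → ℂ), Continuous v → HasCompactSupport v →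
      ∫ s : ↥N, v ⟨x * (s : G) * x⁻¹, hNrm.conj_mem (s : G) s.2 x⟩ ∂lamN
        = (σ x : ℂ) * ∫ s : ↥N, v s ∂lamN)
    (hinvN : ∀ (v : ↥N → ℂ), Continuous v → HasCompactSupport v →
      ∫ s : ↥N, v s⁻¹ * ((ΔN s⁻¹ : ℝ) : ℂ) ∂lamN = ∫ s : ↥N, v s ∂lamN)
    (ξ : N →* Circle) (hξcont : Continuous fun s : ↥N => ξ s)
    (hinv : ∀ (x s : G) (hs : s ∈ N) (hs' : x⁻¹ * s * x ∈ N),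
      ξ ⟨x⁻¹ * s * x, hs'⟩ = ξ ⟨s, hs⟩)
    (f : G → ℂ) (hf : Continuous f) (hfc : HasCompactSupport f) (x : G) :
    ∫ s : ↥N, ((ΔG ((x * (s : G))⁻¹) : ℝ) : ℂ) * starRingEnd ℂ (f ((x * (s : G))⁻¹))
        * starRingEnd ℂ (ξ s) ∂lamN
      = ((ΔG x⁻¹ : ℝ) : ℂ) * ((σ x : ℝ) : ℂ)
        * starRingEnd ℂ (∫ s : ↥N, f (x⁻¹ * (s : G)) * starRingEnd ℂ (ξ s) ∂lamN) :=
  Txi_involution_general lamG N hNrm hNc lamN ΔG hΔG ΔN hrestr σ hσ hinvN ξ hξcont hinv f hf hfc x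
end
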